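/- arXiv:0904.3827 — 2 statements merged into one kernel-verified Lean document; each statement's English description precedes it below -/
import Mathlib

section
/- Let H₁ ⊆ H₂ be subgroups of G and β ∈ K with Φ(σ)(β) = β for all σ ∈ H₁. Then {σ ∈ H₂ : Φ(σ)(β) = β} = H₁ if and only if K^{Φ(H₂)}⟮β⟯ = K^{Φ(H₁)}, i.e. β is a primitive element of the fixed field of Φ(H₁) over the fixed field of Φ(H₂); and in that case the image in K[X] of the minimal polynomial of β over K^{Φ(H₂)} equals ∏_{i=1}^{d} (X − Φ(σ_i)(β)), where σ_1,…,σ_d is any complete set of representatives of the left cosets H₂/H₁. -/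
/-!
`K` is the splitting field over `k` of the separable polynomial `f`, so `K/k` is finite Galois,
and since `K = k(α)` the map `σ ↦ Φ σ` is an injective homomorphism on `galoisGroup k α` whose
image of `H` has fixed field `fixedIF k Φ H`. The automorphisms fixing `F₂⟮β⟯` (with
`Fᵢ = fixedIF k Φ Hᵢ`) are then the `Φ σ` with `σ ∈ H₂` and `Φ σ β = β`, so the Galois
correspondence turns `Stab_{H₂}(β) = H₁` into `F₂⟮β⟯ = F₁`.

For the minimal polynomial: left multiplication by `τ ∈ H₂` permutes the cosets `σ H₁`, so
`∏ σ ∈ T, (X - Φ σ β)` is fixed by `Φ(H₂)`, i.e. has coefficients in `F₂`, and it vanishes at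
`β`. When the stabiliser is exactly `H₁` its roots are pairwise distinct conjugates of `β`, so it
is divisible by, and divides, the minimal polynomial.
-/

open MvPolynomial Polynomial

variable (k : Type*) {K : Type*} [Field k] [Field K] [Algebra k K] {n : ℕ}

/-- The ideal of `α`-relations. -/
noncomputable def relIdeal (α : Fin n → K) : Ideal (MvPolynomial (Fin n) k) :=
  RingHom.ker (MvPolynomial.aeval α : MvPolynomial (Fin n) k →ₐ[k] K)

/-- The Galois group of `α` over `k`: permutations stabilizing the ideal of relations. -/
def galoisGroup (α : Fin n → K) : Subgroup (Equiv.Perm (Fin n)) where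
  carrier := {σ | MvPolynomial.rename ⇑σ '' (relIdeal k α : Set (MvPolynomial (Fin n) k))
      = (relIdeal k α : Set (MvPolynomial (Fin n) k))}
  one_mem' := by
    have h : ∀ p : MvPolynomial (Fin n) k, rename ⇑(1 : Equiv.Perm (Fin n)) p = p := by
      intro p; simp [Equiv.Perm.coe_one, rename_id]
    simp only [Set.mem_setOf_eq]
    rw [Set.image_congr' h]
    exact Set.image_id _
  mul_mem' := by
    intro σ τ hσ hτ
    simp only [Set.mem_setOf_eq] at *
    have h : ∀ p : MvPolynomial (Fin n) k,
        rename ⇑(σ * τ) p = rename ⇑σ (rename ⇑τ p) := by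
      intro p; rw [rename_rename]; rfl
    rw [Set.image_congr' h]
    calc (fun p => rename ⇑σ (rename ⇑τ p)) '' (relIdeal k α : Set (MvPolynomial (Fin n) k))
        = rename ⇑σ '' (rename ⇑τ '' (relIdeal k α : Set (MvPolynomial (Fin n) k))) :=
          (Set.image_comp _ _ _)
      _ = _ := by rw [hτ, hσ]
  inv_mem' := by
    intro σ hσ
    simp only [Set.mem_setOf_eq] at *
    conv_lhs => rw [← hσ]
    rw [← Set.image_comp]
    have h : ∀ p : MvPolynomial (Fin n) k,
        (rename ⇑σ⁻¹ ∘ rename ⇑σ) p = p := by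
      intro p
      simp only [Function.comp_apply, rename_rename]
      have : (⇑σ⁻¹ ∘ ⇑σ) = id := by
        funext i; simp
      rw [this, rename_id, AlgHom.id_apply]
    rw [Set.image_congr' h]
    exact Set.image_id _

/-- The subfield of `K` fixed by the automorphisms `Φ σ` for `σ ∈ H`. -/
def fixedIF (Φ : Equiv.Perm (Fin n) → (K ≃ₐ[k] K)) (H : Subgroup (Equiv.Perm (Fin n))) :
    IntermediateField k K where
  carrier := {x : K | ∀ σ ∈ H, Φ σ x = x}
  mul_mem' := by
    intro a b ha hb σ hσ
    rw [map_mul, ha σ hσ, hb σ hσ]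
  one_mem' := by intro σ hσ; rw [map_one]
  add_mem' := by
    intro a b ha hb σ hσ
    rw [map_add, ha σ hσ, hb σ hσ]
  zero_mem' := by intro σ hσ; rw [map_zero]
  algebraMap_mem' := by intro r σ hσ; exact (Φ σ).commutes r
  inv_mem' := by
    intro x hx σ hσ
    rw [map_inv₀, hx σ hσ]

section LeftTransversal

variable {Γ M : Type*} [Group Γ] [CommMonoid M] {H₁ H₂ : Subgroup Γ} {T : Finset Γ}

theorem eq_of_inv_mul_mem_of_existsUnique
    (hrep : ∀ τ ∈ H₂, ∃! σ : Γ, σ ∈ T ∧ σ⁻¹ * τ ∈ H₁) {σ σ' : Γ} (hσ : σ ∈ T) (hσ' : σ' ∈ T)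
    (hσ'₂ : σ' ∈ H₂) (h : σ⁻¹ * σ' ∈ H₁) : σ = σ' :=
  (hrep σ' hσ'₂).unique ⟨hσ, h⟩ ⟨hσ', by simp [one_mem]⟩

theorem prod_mul_left_eq_of_existsUnique (hT : ∀ σ ∈ T, σ ∈ H₂)
    (hrep : ∀ τ ∈ H₂, ∃! σ : Γ, σ ∈ T ∧ σ⁻¹ * τ ∈ H₁) (f : Γ → M)
    (hf : ∀ σ ∈ H₂, ∀ h ∈ H₁, f (σ * h) = f σ) {τ : Γ} (hτ : τ ∈ H₂) :
    ∏ σ ∈ T, f (τ * σ) = ∏ σ ∈ T, f σ := by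
  choose! rep hrepT hrepH₁ using fun ρ (hρ : ρ ∈ H₂) => (hrep ρ hρ).exists
  have hrep_mem : ∀ g ∈ H₂, ∀ σ ∈ T, rep (g * σ) ∈ T := fun g hg σ hσ =>
    hrepT _ (mul_mem hg (hT σ hσ))
  have hrep_rep : ∀ g ∈ H₂, ∀ σ ∈ T, rep (g⁻¹ * rep (g * σ)) = σ := by
    intro g hg σ hσ
    have hρ := hrep_mem g hg σ hσ
    have hgρ : g⁻¹ * rep (g * σ) ∈ H₂ := mul_mem (inv_mem hg) (hT _ hρ)
    refine eq_of_inv_mul_mem_of_existsUnique hrep (hrepT _ hgρ) hσ (hT σ hσ) ?_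
    have := mul_mem (hrepH₁ _ hgρ) (hrepH₁ _ (mul_mem hg (hT σ hσ)))
    simpa [mul_assoc] using this
  refine Finset.prod_nbij' (fun σ => rep (τ * σ)) (fun σ => rep (τ⁻¹ * σ))
    (hrep_mem τ hτ) (hrep_mem τ⁻¹ (inv_mem hτ)) (hrep_rep τ hτ) ?_ fun σ hσ => ?_
  · simpa using hrep_rep τ⁻¹ (inv_mem hτ)
  · have hτσ := mul_mem hτ (hT σ hσ)
    simpa using hf _ (hT _ (hrepT _ hτσ)) _ (hrepH₁ _ hτσ)

end LeftTransversal

theorem minpoly_map_eq_prod_X_sub_C {F L ι : Type*} [Field F] [Field L] [Algebra F L]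
    {s : Finset ι} {r : ι → L} {β : L}
    (hlifts : ∏ i ∈ s, (Polynomial.X - Polynomial.C (r i)) ∈ lifts (algebraMap F L))
    (hβ : ∃ i ∈ s, r i = β)
    (hr : Set.InjOn r s) (hroot : ∀ i ∈ s, aeval (r i) (minpoly F β) = 0) :
    (minpoly F β).map (algebraMap F L) = ∏ i ∈ s, (Polynomial.X - Polynomial.C (r i)) := by
  have hmonic : (∏ i ∈ s, (Polynomial.X - Polynomial.C (r i))).Monic :=
    monic_prod_of_monic _ _ fun i _ => monic_X_sub_C _
  obtain ⟨Q, hQ, -, hQmonic⟩ := lifts_and_degree_eq_and_monic hlifts hmonic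
  have hQβ : aeval β Q = 0 := by
    obtain ⟨i, hi, rfl⟩ := hβ
    rw [← Polynomial.eval_map_algebraMap, hQ, Polynomial.eval_prod]
    exact Finset.prod_eq_zero hi (by simp)
  have hdvd : (minpoly F β).map (algebraMap F L) ∣ ∏ i ∈ s, (Polynomial.X - Polynomial.C (r i)) :=
    hQ ▸ Polynomial.map_dvd _ (minpoly.dvd F β hQβ)
  have hdvd' : ∏ i ∈ s, (Polynomial.X - Polynomial.C (r i)) ∣ (minpoly F β).map (algebraMap F L) :=
    Finset.prod_dvd_of_coprime
      (fun i hi j hj hij =>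
        isCoprime_X_sub_C_of_isUnit_sub (sub_ne_zero.mpr (hr.ne hi hj hij)).isUnit)
      fun i hi => dvd_iff_isRoot.mpr (by rw [IsRoot, Polynomial.eval_map_algebraMap, hroot i hi])
  exact eq_of_monic_of_associated ((minpoly.monic ⟨Q, hQmonic, hQβ⟩).map _) hmonic
    (associated_of_dvd_dvd hdvd hdvd')

namespace IntermediateField

variable {k} {F : IntermediateField k K} {φ : K ≃ₐ[k] K}

theorem forall_mem_restrictScalars_adjoin_simple_apply_eq_iff (β : K) :
    (∀ x ∈ (adjoin F {β}).restrictScalars k, φ x = x) ↔ (∀ x ∈ F, φ x = x) ∧ φ β = β := by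
  rw [restrictScalars_adjoin]
  simpa [or_imp, forall_and, and_comm] using
    forall_mem_adjoin_smul_eq_self_iff k (S := (F : Set K) ∪ {β}) φ

theorem aeval_apply_minpoly_eq_zero (hφ : ∀ x ∈ F, φ x = x) (x : K) :
    aeval (φ x) (minpoly F x) = 0 := by
  let ψ : K →ₐ[F] K := { φ.toRingHom with commutes' := fun c => hφ c c.2 }
  rw [show φ x = ψ x from rfl, aeval_algHom_apply, minpoly.aeval, map_zero]

end IntermediateField

section Generators

variable {k} {α : Fin n → K}

theorem finiteDimensional_and_isGalois_of_adjoin_range_eq_top (hinj : Function.Injective α)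
    (hcoeff : ∀ m : ℕ, (∏ i : Fin n, (Polynomial.X - Polynomial.C (α i)) : K[X]).coeff m ∈
      (algebraMap k K).range)
    (hgen : Algebra.adjoin k (Set.range α) = ⊤) :
    FiniteDimensional k K ∧ IsGalois k K := by
  obtain ⟨f, hf, -, hmonic⟩ := lifts_and_degree_eq_and_monic
    ((lifts_iff_coeff_lifts _).mpr hcoeff)
    (monic_prod_of_monic _ _ fun i _ => monic_X_sub_C (α i))
  have hroots : f.rootSet K = Set.range α := by
    ext x
    rw [mem_rootSet, ← Polynomial.eval_map_algebraMap, hf]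
    simp [hmonic.ne_zero, Polynomial.eval_prod, Finset.prod_eq_zero_iff, sub_eq_zero,
      eq_comm (a := x)]
  have : IsSplittingField k K f :=
    ⟨hf ▸ Splits.prod fun i _ => Splits.X_sub_C _, hroots ▸ hgen⟩
  have hsep : f.Separable := by
    rw [← separable_map (algebraMap k K), hf]
    exact separable_prod_X_sub_C_iff.mpr hinj
  exact ⟨IsSplittingField.finiteDimensional K f, IsGalois.of_separable_splitting_field hsep⟩

theorem algEquiv_ext_of_adjoin_range_eq_top (hgen : Algebra.adjoin k (Set.range α) = ⊤)
    {φ ψ : K ≃ₐ[k] K} (h : ∀ i, φ (α i) = ψ (α i)) : φ = ψ :=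
  AlgEquiv.coe_toAlgHom_injective <| AlgHom.ext_of_adjoin_eq_top hgen <| by
    rintro _ ⟨i, rfl⟩
    exact h i

variable {Φ : Equiv.Perm (Fin n) → (K ≃ₐ[k] K)} {H : Subgroup (Equiv.Perm (Fin n))}

theorem map_mul_of_apply_eq (hgen : Algebra.adjoin k (Set.range α) = ⊤)
    (hΦ : ∀ σ ∈ H, ∀ i, Φ σ (α i) = α (σ i)) {σ τ : Equiv.Perm (Fin n)} (hσ : σ ∈ H)
    (hτ : τ ∈ H) : Φ (σ * τ) = Φ σ * Φ τ :=
  algEquiv_ext_of_adjoin_range_eq_top hgen fun i => by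
    rw [AlgEquiv.mul_apply, hΦ _ (mul_mem hσ hτ), hΦ τ hτ, hΦ σ hσ, Equiv.Perm.mul_apply]

theorem eq_of_apply_eq (hinj : Function.Injective α) (hΦ : ∀ σ ∈ H, ∀ i, Φ σ (α i) = α (σ i))
    {σ τ : Equiv.Perm (Fin n)} (hσ : σ ∈ H) (hτ : τ ∈ H) (h : Φ σ = Φ τ) : σ = τ :=
  Equiv.ext fun i => hinj <| by rw [← hΦ σ hσ, ← hΦ τ hτ, h]

def permAutHom (hgen : Algebra.adjoin k (Set.range α) = ⊤)
    (hΦ : ∀ σ ∈ H, ∀ i, Φ σ (α i) = α (σ i)) : H →* (K ≃ₐ[k] K) :=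
  MonoidHom.mk' (fun σ => Φ σ) fun σ τ => map_mul_of_apply_eq hgen hΦ σ.2 τ.2

theorem fixedIF_eq_fixedField_range (hgen : Algebra.adjoin k (Set.range α) = ⊤)
    (hΦ : ∀ σ ∈ H, ∀ i, Φ σ (α i) = α (σ i)) :
    fixedIF k Φ H = IntermediateField.fixedField (permAutHom hgen hΦ).range := by
  ext x
  simp [fixedIF, IntermediateField.mem_fixedField_iff, permAutHom]

theorem mem_fixingSubgroup_fixedIF_iff [FiniteDimensional k K]
    (hgen : Algebra.adjoin k (Set.range α) = ⊤) (hΦ : ∀ σ ∈ H, ∀ i, Φ σ (α i) = α (σ i))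
    (φ : K ≃ₐ[k] K) : φ ∈ (fixedIF k Φ H).fixingSubgroup ↔ ∃ σ ∈ H, Φ σ = φ := by
  rw [fixedIF_eq_fixedField_range hgen hΦ, IntermediateField.fixingSubgroup_fixedField]
  simp [permAutHom]

end Generators

section Stabilizer

variable {k} {α : Fin n → K} {Φ : Equiv.Perm (Fin n) → (K ≃ₐ[k] K)}
  {H₁ H₂ : Subgroup (Equiv.Perm (Fin n))} {β : K}

theorem fixedIF_le (h12 : H₁ ≤ H₂) : fixedIF k Φ H₂ ≤ fixedIF k Φ H₁ :=
  fun _ hx σ hσ => hx σ (h12 hσ)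

theorem stab_eq_iff_restrictScalars_adjoin_eq [FiniteDimensional k K] [IsGalois k K]
    (hinj : Function.Injective α) (hgen : Algebra.adjoin k (Set.range α) = ⊤)
    (hΦ : ∀ σ ∈ H₂, ∀ i, Φ σ (α i) = α (σ i)) (h12 : H₁ ≤ H₂)
    (hβfix : ∀ σ ∈ H₁, Φ σ β = β) :
    (∀ σ, (σ ∈ H₂ ∧ Φ σ β = β) ↔ σ ∈ H₁) ↔
      (IntermediateField.adjoin (fixedIF k Φ H₂) {β}).restrictScalars k = fixedIF k Φ H₁ := by
  have hle : (IntermediateField.adjoin (fixedIF k Φ H₂) {β}).restrictScalars k ≤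
      fixedIF k Φ H₁ := by
    rw [IntermediateField.restrictScalars_adjoin_eq_sup]
    exact sup_le (fixedIF_le h12) (IntermediateField.adjoin_simple_le_iff.mpr hβfix)
  set E := (IntermediateField.adjoin (fixedIF k Φ H₂) {β}).restrictScalars k
  have hfixE : ∀ φ, φ ∈ E.fixingSubgroup ↔ (∃ σ ∈ H₂, Φ σ = φ) ∧ φ β = β := fun φ => by
    rw [IntermediateField.mem_fixingSubgroup_iff,
      IntermediateField.forall_mem_restrictScalars_adjoin_simple_apply_eq_iff,
      ← IntermediateField.mem_fixingSubgroup_iff, mem_fixingSubgroup_fixedIF_iff hgen hΦ]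
  constructor
  · intro hstab
    refine le_antisymm hle fun x hx => ?_
    rw [← IsGalois.fixedField_fixingSubgroup E, IntermediateField.mem_fixedField_iff]
    intro φ hφ
    obtain ⟨⟨σ, hσ, rfl⟩, hσβ⟩ := (hfixE φ).mp hφ
    exact hx σ ((hstab σ).mp ⟨hσ, hσβ⟩)
  · intro hE σ
    refine ⟨fun ⟨hσ, hσβ⟩ => ?_, fun hσ => ⟨h12 hσ, hβfix σ hσ⟩⟩
    have hσE : Φ σ ∈ (fixedIF k Φ H₁).fixingSubgroup := hE ▸ (hfixE _).mpr ⟨⟨σ, hσ, rfl⟩, hσβ⟩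
    obtain ⟨τ, hτ, hτσ⟩ :=
      (mem_fixingSubgroup_fixedIF_iff hgen (fun σ hσ => hΦ σ (h12 hσ)) _).mp hσE
    rwa [← eq_of_apply_eq hinj hΦ (h12 hτ) hσ hτσ]

theorem minpoly_map_eq_prod_of_stab_eq (hgen : Algebra.adjoin k (Set.range α) = ⊤)
    (hΦ : ∀ σ ∈ H₂, ∀ i, Φ σ (α i) = α (σ i)) (h12 : H₁ ≤ H₂) (hβfix : ∀ σ ∈ H₁, Φ σ β = β)
    (hstab : ∀ σ, (σ ∈ H₂ ∧ Φ σ β = β) ↔ σ ∈ H₁) {T : Finset (Equiv.Perm (Fin n))}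
    (hT : ∀ σ ∈ T, σ ∈ H₂) (hrep : ∀ τ ∈ H₂, ∃! σ, σ ∈ T ∧ σ⁻¹ * τ ∈ H₁) :
    (minpoly (fixedIF k Φ H₂) β).map (algebraMap (fixedIF k Φ H₂) K) =
      ∏ σ ∈ T, (Polynomial.X - Polynomial.C (Φ σ β)) := by
  have hmul : ∀ σ ∈ H₂, ∀ τ ∈ H₂, ∀ x, Φ (σ * τ) x = Φ σ (Φ τ x) := fun σ hσ τ hτ x => by
    rw [map_mul_of_apply_eq hgen hΦ hσ hτ, AlgEquiv.mul_apply]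
  refine minpoly_map_eq_prod_X_sub_C ?_ ?_ ?_ fun σ hσ =>
    IntermediateField.aeval_apply_minpoly_eq_zero
      (fun x (hx : x ∈ fixedIF k Φ H₂) => hx σ (hT σ hσ)) β
  · have hinv : ∀ τ ∈ H₂, (∏ σ ∈ T, (Polynomial.X - Polynomial.C (Φ σ β))).map
        (Φ τ : K →+* K) = ∏ σ ∈ T, (Polynomial.X - Polynomial.C (Φ σ β)) := fun τ hτ => by
      rw [Polynomial.map_prod]
      simp only [Polynomial.map_sub, Polynomial.map_X, Polynomial.map_C]
      calc ∏ σ ∈ T, (Polynomial.X - Polynomial.C ((Φ τ : K →+* K) (Φ σ β)))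
          = ∏ σ ∈ T, (Polynomial.X - Polynomial.C (Φ (τ * σ) β)) :=
            Finset.prod_congr rfl fun σ hσ => by rw [hmul τ hτ σ (hT σ hσ)]; rfl
        _ = _ := prod_mul_left_eq_of_existsUnique hT hrep
            (fun σ => Polynomial.X - Polynomial.C (Φ σ β))
            (fun σ hσ h hh => by rw [hmul σ hσ h (h12 hh), hβfix h hh]) hτ
    refine (lifts_iff_coeff_lifts _).mpr fun m => ⟨⟨_, fun τ hτ => ?_⟩, rfl⟩
    have := congrArg (Polynomial.coeff · m) (hinv τ hτ)
    rwa [Polynomial.coeff_map] at this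
  · obtain ⟨σ₀, ⟨hσ₀, hσ₀₁⟩, -⟩ := hrep 1 (one_mem H₂)
    exact ⟨σ₀, hσ₀, hβfix σ₀ (by simpa using inv_mem hσ₀₁)⟩
  · intro σ hσ σ' hσ' h
    beta_reduce at h
    refine eq_of_inv_mul_mem_of_existsUnique hrep hσ hσ' (hT σ' hσ') ((hstab _).mp ⟨?_, ?_⟩)
    · exact mul_mem (inv_mem (hT σ hσ)) (hT σ' hσ')
    · rw [hmul _ (inv_mem (hT σ hσ)) _ (hT σ' hσ'), ← h, ← hmul _ (inv_mem (hT σ hσ)) _ (hT σ hσ),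
        inv_mul_cancel, hβfix 1 (one_mem H₁)]

end Stabilizer

/-- characterization of `Stab_{H₂}(β) = H₁` via fixed fields, and the minimal
polynomial of `β` over the fixed field of `H₂` as a product over coset representatives. -/
theorem stab_eq_iff_adjoin_eq_fixed (α : Fin n → K) (hinj : Function.Injective α)
    (hcoeff : ∀ m : ℕ, (∏ i : Fin n, (Polynomial.X - Polynomial.C (α i)) : K[X]).coeff m ∈
      (algebraMap k K).range)
    (hgen : Algebra.adjoin k (Set.range α) = ⊤)
    (Φ : Equiv.Perm (Fin n) → (K ≃ₐ[k] K))
    (hΦ : ∀ σ ∈ galoisGroup k α, ∀ i : Fin n, Φ σ (α i) = α (σ i))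
    (H₁ H₂ : Subgroup (Equiv.Perm (Fin n))) (h12 : H₁ ≤ H₂) (h2G : H₂ ≤ galoisGroup k α)
    (β : K) (hβfix : ∀ σ ∈ H₁, Φ σ β = β) :
    ((∀ σ : Equiv.Perm (Fin n), (σ ∈ H₂ ∧ Φ σ β = β) ↔ σ ∈ H₁) ↔
      (IntermediateField.adjoin (↥(fixedIF k Φ H₂)) {β}).restrictScalars k = fixedIF k Φ H₁) ∧
    ((∀ σ : Equiv.Perm (Fin n), (σ ∈ H₂ ∧ Φ σ β = β) ↔ σ ∈ H₁) →
      ∀ T : Finset (Equiv.Perm (Fin n)), (∀ σ ∈ T, σ ∈ H₂) →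
        (∀ τ ∈ H₂, ∃! σ : Equiv.Perm (Fin n), σ ∈ T ∧ σ⁻¹ * τ ∈ H₁) →
        (minpoly (↥(fixedIF k Φ H₂)) β).map (algebraMap (↥(fixedIF k Φ H₂)) K) =
          ∏ σ ∈ T, (Polynomial.X - Polynomial.C (Φ σ β))) := by
  obtain ⟨_, _⟩ := finiteDimensional_and_isGalois_of_adjoin_range_eq_top hinj hcoeff hgen
  have hΦ₂ : ∀ σ ∈ H₂, ∀ i, Φ σ (α i) = α (σ i) := fun σ hσ => hΦ σ (h2G hσ)
  exact ⟨stab_eq_iff_restrictScalars_adjoin_eq hinj hgen hΦ₂ h12 hβfix,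
    fun hstab _ hT hrep => minpoly_map_eq_prod_of_stab_eq hgen hΦ₂ h12 hβfix hstab hT hrep⟩
end

section
/- If the map C ↦ β_C from L/H to K is injective, then for every orbit O of the action of G by left multiplication on L/H, the polynomial F_O = ∏_{C ∈ O} (X − β_C) ∈ K[X] is the image under the coefficientwise map k → K of a monic irreducible polynomial of k[X], and R = ∏_O F_O; consequently the multiset of degrees of the monic irreducible factors of R over k equals the multiset of cardinalities of the orbits of G on L/H. -/
/-!
The `α i` are distinct roots of a polynomial over `k` and generate `K`, so `K/k` is Galois, and
an automorphism `g` corresponds to the permutation `σ ∈ G` with `g (α i) = α (σ i)`. Then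
`g (β C) = β (σ • C)`, so `β` maps each `G`-orbit of cosets onto a `Gal(K/k)`-orbit in `K`. Over a
Galois extension the product of `X - y` over the Galois orbit of `x` is the minimal polynomial of
`x`, so by injectivity of `β` each `F_O` is a minimal polynomial, and unique factorization of `R`
gives the degrees.
-/

open MvPolynomial Polynomial
open scoped Classical

variable (k : Type*) {K : Type*} [Field k] [Field K] [Algebra k K] {n : ℕ}

variable {k}

section GaloisGroup

variable {α : Fin n → K} {σ : Equiv.Perm (Fin n)}

lemma aeval_rename_of_algEquiv_apply (g : K ≃ₐ[k] K) (hg : ∀ i, g (α i) = α (σ i))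
    (p : MvPolynomial (Fin n) k) :
    MvPolynomial.aeval α (rename σ p) = g (MvPolynomial.aeval α p) := by
  rw [aeval_rename, ← AlgEquiv.coe_toAlgHom, comp_aeval_apply]
  exact congrArg (MvPolynomial.aeval · p) (funext fun i => (hg i).symm)

lemma mem_galoisGroup_of_algEquiv_apply (g : K ≃ₐ[k] K) (hg : ∀ i, g (α i) = α (σ i)) :
    σ ∈ galoisGroup k α := by
  have hrel : ∀ p, rename σ p ∈ relIdeal k α ↔ p ∈ relIdeal k α := fun p => by
    simp only [relIdeal, RingHom.mem_ker, aeval_rename_of_algEquiv_apply g hg,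
      map_eq_zero_iff _ g.injective]
  ext p
  refine ⟨?_, fun hp => ⟨rename σ.symm p, ?_, ?_⟩⟩
  · rintro ⟨q, hq, rfl⟩
    exact (hrel q).2 hq
  · rw [SetLike.mem_coe, ← hrel, rename_rename, Equiv.self_comp_symm, rename_id_apply]
    exact hp
  · rw [rename_rename, Equiv.self_comp_symm, rename_id_apply]

/-- The automorphism is induced by `rename σ` on `k[x_1, …, x_n] ⧸ 𝔐 ≃ K`; it is onto because its
image contains every `α i`. -/
lemma exists_algEquiv_apply_of_mem_galoisGroup (hgen : Algebra.adjoin k (Set.range α) = ⊤)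
    (hσ : σ ∈ galoisGroup k α) : ∃ g : K ≃ₐ[k] K, ∀ i, g (α i) = α (σ i) := by
  have hsurj : Function.Surjective (MvPolynomial.aeval α : MvPolynomial (Fin n) k →ₐ[k] K) := by
    rw [← AlgHom.range_eq_top, ← Algebra.adjoin_range_eq_range_aeval, hgen]
  have hker : ∀ p ∈ RingHom.ker (MvPolynomial.aeval α : MvPolynomial (Fin n) k →ₐ[k] K),
      (MvPolynomial.aeval α).comp (rename σ) p = 0 := fun p hp => by
    have : rename σ p ∈ rename σ '' (relIdeal k α : Set _) := ⟨p, hp, rfl⟩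
    rw [hσ] at this
    exact this
  let φ : K →ₐ[k] K := (Ideal.Quotient.liftₐ _ _ hker).comp
    (Ideal.quotientKerAlgEquivOfSurjective hsurj).symm.toAlgHom
  have hφ : ∀ i, φ (α i) = α (σ i) := fun i => by
    have : (Ideal.quotientKerAlgEquivOfSurjective hsurj).symm (α i) =
        Ideal.Quotient.mk _ (X i) := by
      rw [AlgEquiv.symm_apply_eq]
      simp
    simp only [φ, AlgHom.comp_apply, AlgEquiv.coe_toAlgHom, this]
    change MvPolynomial.aeval α (rename σ (X i)) = _
    simp
  have hrange : φ.range = ⊤ := top_le_iff.mp <| hgen ▸ Algebra.adjoin_le <| by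
    rintro _ ⟨j, rfl⟩
    exact ⟨α (σ.symm j), (hφ _).trans (congrArg α (σ.apply_symm_apply j))⟩
  exact ⟨AlgEquiv.ofBijective φ ⟨φ.injective, (AlgHom.range_eq_top φ).mp hrange⟩, hφ⟩

end GaloisGroup

section DistinctRoots

variable {α : Fin n → K} {f : k[X]}

lemma aeval_eq_zero_iff_mem_range
    (hf : f.map (algebraMap k K) = ∏ i, (Polynomial.X - Polynomial.C (α i))) {x : K} :
    aeval x f = 0 ↔ x ∈ Set.range α := by
  rw [Polynomial.aeval_def, ← Polynomial.eval_map, hf, Polynomial.eval_prod,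
    Finset.prod_eq_zero_iff]
  simp [sub_eq_zero, eq_comm]

lemma isGalois_of_map_eq_prod_X_sub_C (hinj : Function.Injective α)
    (hf : f.map (algebraMap k K) = ∏ i, (Polynomial.X - Polynomial.C (α i)))
    (hgen : Algebra.adjoin k (Set.range α) = ⊤) : IsGalois k K := by
  have hf0 : f.map (algebraMap k K) ≠ 0 :=
    hf ▸ (monic_prod_of_monic _ _ fun i _ => monic_X_sub_C (α i)).ne_zero
  have hroots : f.rootSet K = Set.range α := Set.ext fun x => by
    rw [mem_rootSet', aeval_eq_zero_iff_mem_range hf, and_iff_right hf0]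
  have : f.IsSplittingField k K :=
    ⟨hf ▸ Splits.prod fun i _ => Splits.X_sub_C (α i), hroots ▸ hgen⟩
  refine IsGalois.of_separable_splitting_field (p := f) ?_
  rw [← separable_map (algebraMap k K), hf]
  exact separable_prod_X_sub_C_iff.2 hinj

lemma exists_perm_algEquiv_apply (hinj : Function.Injective α)
    (hf : f.map (algebraMap k K) = ∏ i, (Polynomial.X - Polynomial.C (α i)))
    (g : K ≃ₐ[k] K) : ∃ σ : Equiv.Perm (Fin n), ∀ i, g (α i) = α (σ i) := by
  have hroot : ∀ i, ∃ j, α j = g (α i) := fun i => by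
    rw [← Set.mem_range, ← aeval_eq_zero_iff_mem_range hf, aeval_algEquiv, AlgHom.comp_apply,
      (aeval_eq_zero_iff_mem_range hf).2 ⟨i, rfl⟩, map_zero]
  choose u hu using hroot
  have hu_inj : Function.Injective u := fun i j hij =>
    hinj (g.injective (by rw [← hu, ← hu, hij]))
  exact ⟨Equiv.ofBijective u (Finite.injective_iff_bijective.1 hu_inj), fun i => (hu i).symm⟩

end DistinctRoots

lemma map_minpoly_eq_prod_X_sub_C_of_coe_eq_orbit [IsGalois k K] (x : K) {s : Finset K}
    (hs : (s : Set K) = MulAction.orbit Gal(K/k) x) :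
    (minpoly k x).map (algebraMap k K) = ∏ y ∈ s, (Polynomial.X - Polynomial.C y) := by
  have hx := Algebra.IsSeparable.isSeparable k x
  have hroots : ((minpoly k x).map (algebraMap k K)).roots = s.val := by
    refine (Multiset.Nodup.ext (nodup_roots (Separable.map hx)) s.nodup).2 fun y => ?_
    rw [Finset.mem_val, ← Finset.mem_coe, hs, ← Normal.minpoly_eq_iff_mem_orbit, eq_comm]
    exact (isConjRoot_iff_mem_minpoly_aroots hx.isIntegral).symm
  rw [(Normal.splits inferInstance x).eq_prod_roots_of_monic ((minpoly.monic hx.isIntegral).map _),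
    hroots, Finset.prod_eq_multiset_prod]

lemma map_minpoly_eq_prod_orbit_of_image_orbit_eq [IsGalois k K] {G X : Type*} [Group G]
    [MulAction G X] [Finite X] {β : X → K} (hβ : Function.Injective β) (x : X)
    (h : β '' MulAction.orbit G x = MulAction.orbit Gal(K/k) (β x)) :
    (minpoly k (β x)).map (algebraMap k K) =
      ∏ y ∈ (Set.toFinite (MulAction.orbit G x)).toFinset, (Polynomial.X - Polynomial.C (β y)) := by
  rw [← Finset.prod_image (f := fun z => Polynomial.X - Polynomial.C z) hβ.injOn]
  refine map_minpoly_eq_prod_X_sub_C_of_coe_eq_orbit _ ?_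
  rw [Finset.coe_image, Set.Finite.coe_toFinset, h]

lemma prod_univ_eq_prod_orbits {G X M : Type*} [Group G] [MulAction G X] [Fintype X]
    [Fintype (MulAction.orbitRel.Quotient G X)] [CommMonoid M] (f : X → M) :
    ∏ x, f x =
      ∏ O : MulAction.orbitRel.Quotient G X, ∏ x ∈ (Set.toFinite O.orbit).toFinset, f x := by
  rw [← Finset.prod_fiberwise Finset.univ
    (fun x => (Quotient.mk'' x : MulAction.orbitRel.Quotient G X)) f]
  refine Finset.prod_congr rfl fun O _ => Finset.prod_congr ?_ fun _ _ => rfl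
  ext x
  simp [MulAction.orbitRel.Quotient.mem_orbit]

lemma normalizedFactors_prod_of_monic_of_irreducible {ι : Type*} (s : Finset ι) (q : ι → k[X])
    (hmonic : ∀ i ∈ s, (q i).Monic) (hirr : ∀ i ∈ s, Irreducible (q i)) :
    UniqueFactorizationMonoid.normalizedFactors (∏ i ∈ s, q i) = s.val.map q := by
  rw [Finset.prod_eq_multiset_prod, UniqueFactorizationMonoid.normalizedFactors_prod_eq _
    (Multiset.forall_mem_map_iff.2 hirr), Multiset.map_map]
  exact Multiset.map_congr rfl fun i hi => (hmonic i hi).normalize_eq_self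

section Resolvent

variable {α : Fin n → K} {H L : Subgroup (Equiv.Perm (Fin n))} {P : MvPolynomial (Fin n) k}
  {β : L ⧸ H.subgroupOf L → K}

lemma algEquiv_apply_eq_smul
    (hβ : ∀ σ : ↥L, β (QuotientGroup.mk σ) =
      MvPolynomial.aeval α (rename ⇑(σ : Equiv.Perm (Fin n)) P))
    {σ : L} (g : K ≃ₐ[k] K) (hg : ∀ i, g (α i) = α ((σ : Equiv.Perm (Fin n)) i))
    (C : L ⧸ H.subgroupOf L) : g (β C) = β (σ • C) := by
  induction C using QuotientGroup.induction_on with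
  | H τ => rw [hβ, ← aeval_rename_of_algEquiv_apply g hg, rename_rename]; exact (hβ (σ * τ)).symm

lemma image_orbit_eq_orbit {f : k[X]} (hinj : Function.Injective α)
    (hf : f.map (algebraMap k K) = ∏ i, (Polynomial.X - Polynomial.C (α i)))
    (hgen : Algebra.adjoin k (Set.range α) = ⊤) (hGL : galoisGroup k α ≤ L)
    (hβ : ∀ σ : ↥L, β (QuotientGroup.mk σ) =
      MvPolynomial.aeval α (rename ⇑(σ : Equiv.Perm (Fin n)) P))
    (C : L ⧸ H.subgroupOf L) :
    β '' MulAction.orbit ((galoisGroup k α).subgroupOf L) C = MulAction.orbit Gal(K/k) (β C) := by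
  ext y
  constructor
  · rintro ⟨_, ⟨s, rfl⟩, rfl⟩
    obtain ⟨g, hg⟩ :=
      exists_algEquiv_apply_of_mem_galoisGroup hgen (Subgroup.mem_subgroupOf.1 s.2)
    exact ⟨g, algEquiv_apply_eq_smul hβ g hg C⟩
  · rintro ⟨g, rfl⟩
    obtain ⟨σ, hσ⟩ := exists_perm_algEquiv_apply hinj hf g
    have hσG := mem_galoisGroup_of_algEquiv_apply g hσ
    exact ⟨_, ⟨⟨⟨σ, hGL hσG⟩, hσG⟩, rfl⟩, (algEquiv_apply_eq_smul hβ g hσ C).symm⟩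

end Resolvent

theorem resolvent_factorization_by_orbits_general
    (α : Fin n → K) (hinj : Function.Injective α)
    (hcoeff : ∀ m : ℕ, (∏ i : Fin n, (Polynomial.X - Polynomial.C (α i)) : K[X]).coeff m ∈
      (algebraMap k K).range)
    (hgen : Algebra.adjoin k (Set.range α) = ⊤)
    (H L : Subgroup (Equiv.Perm (Fin n))) (hGL : galoisGroup k α ≤ L)
    (P : MvPolynomial (Fin n) k)
    (β : (↥L ⧸ H.subgroupOf L) → K)
    (hβ : ∀ σ : ↥L, β (QuotientGroup.mk σ) =
      MvPolynomial.aeval α (rename ⇑(σ : Equiv.Perm (Fin n)) P))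
    (hβinj : Function.Injective β) :
    (∀ O : MulAction.orbitRel.Quotient (↥((galoisGroup k α).subgroupOf L))
        (↥L ⧸ H.subgroupOf L),
      ∃ q : Polynomial k, q.Monic ∧ Irreducible q ∧
        q.map (algebraMap k K) =
          ∏ C ∈ (Set.toFinite O.orbit).toFinset, (Polynomial.X - Polynomial.C (β C))) ∧
    ((∏ C ∈ (Set.toFinite (Set.univ : Set (↥L ⧸ H.subgroupOf L))).toFinset,
        (Polynomial.X - Polynomial.C (β C))) =
      ∏ O ∈ (Set.toFinite (Set.univ : Set (MulAction.orbitRel.Quotient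
          (↥((galoisGroup k α).subgroupOf L)) (↥L ⧸ H.subgroupOf L)))).toFinset,
        ∏ C ∈ (Set.toFinite O.orbit).toFinset, (Polynomial.X - Polynomial.C (β C))) ∧
    (∀ R₀ : Polynomial k, R₀.Monic →
      R₀.map (algebraMap k K) =
        (∏ C ∈ (Set.toFinite (Set.univ : Set (↥L ⧸ H.subgroupOf L))).toFinset,
          (Polynomial.X - Polynomial.C (β C))) →
      (UniqueFactorizationMonoid.normalizedFactors R₀).map Polynomial.natDegree =
        ((Set.toFinite (Set.univ : Set (MulAction.orbitRel.Quotient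
            (↥((galoisGroup k α).subgroupOf L)) (↥L ⧸ H.subgroupOf L)))).toFinset.val).map
          (fun O => Nat.card O.orbit)) := by
  obtain ⟨f, hf⟩ := (mem_lifts _).1 ((lifts_iff_coeff_lifts _).2 hcoeff)
  have := isGalois_of_map_eq_prod_X_sub_C hinj hf hgen
  have hint (x : K) : IsIntegral k x := Algebra.IsSeparable.isIntegral k x
  have hfactor (O : MulAction.orbitRel.Quotient ((galoisGroup k α).subgroupOf L)
      (L ⧸ H.subgroupOf L)) :
      (minpoly k (β O.out)).map (algebraMap k K) =
        ∏ C ∈ (Set.toFinite O.orbit).toFinset, (Polynomial.X - Polynomial.C (β C)) := by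
    simp only [MulAction.orbitRel.Quotient.orbit_eq_orbit_out O Quotient.out_eq']
    exact map_minpoly_eq_prod_orbit_of_image_orbit_eq hβinj _
      (image_orbit_eq_orbit hinj hf hgen hGL hβ _)
  have hprod := prod_univ_eq_prod_orbits (G := (galoisGroup k α).subgroupOf L)
    fun C : L ⧸ H.subgroupOf L => Polynomial.X - Polynomial.C (β C)
  simp only [Set.Finite.toFinset_univ]
  refine ⟨fun O => ⟨_, minpoly.monic (hint _), minpoly.irreducible (hint _), hfactor O⟩, hprod,
    fun R₀ _ hR₀ => ?_⟩
  have hR₀_eq : R₀ = ∏ O : MulAction.orbitRel.Quotient ((galoisGroup k α).subgroupOf L)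
      (L ⧸ H.subgroupOf L), minpoly k (β O.out) :=
    map_injective _ (algebraMap k K).injective <| by
      rw [hR₀, hprod, Polynomial.map_prod]
      exact Finset.prod_congr rfl fun O _ => (hfactor O).symm
  rw [hR₀_eq, normalizedFactors_prod_of_monic_of_irreducible _ _
    (fun O _ => minpoly.monic (hint _)) (fun O _ => minpoly.irreducible (hint _)), Multiset.map_map]
  refine Multiset.map_congr rfl fun O _ => ?_
  rw [Function.comp_apply, ← natDegree_map (algebraMap k K), hfactor O,
    natDegree_finsetProd_X_sub_C_eq_card, Nat.card_eq_card_finite_toFinset]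

/-- if the resolvent is separable, each factor attached to a `G`-orbit `O` of
cosets is the image of a monic irreducible polynomial of `k[X]`, the resolvent is the product of
these factors, and the multiset of degrees of the monic irreducible factors of the resolvent
over `k` is the multiset of cardinalities of the orbits of `G` on `L/H`. -/
theorem resolvent_factorization_by_orbits
    (α : Fin n → K) (hinj : Function.Injective α)
    (hcoeff : ∀ m : ℕ, (∏ i : Fin n, (Polynomial.X - Polynomial.C (α i)) : K[X]).coeff m ∈
      (algebraMap k K).range)
    (hgen : Algebra.adjoin k (Set.range α) = ⊤)
    (H L : Subgroup (Equiv.Perm (Fin n))) (hHL : H ≤ L) (hGL : galoisGroup k α ≤ L)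
    (P : MvPolynomial (Fin n) k) (hstab : ∀ σ ∈ L, (rename ⇑σ P = P ↔ σ ∈ H))
    (β : (↥L ⧸ H.subgroupOf L) → K)
    (hβ : ∀ σ : ↥L, β (QuotientGroup.mk σ) =
      MvPolynomial.aeval α (rename ⇑(σ : Equiv.Perm (Fin n)) P))
    (hβinj : Function.Injective β) :
    (∀ O : MulAction.orbitRel.Quotient (↥((galoisGroup k α).subgroupOf L))
        (↥L ⧸ H.subgroupOf L),
      ∃ q : Polynomial k, q.Monic ∧ Irreducible q ∧
        q.map (algebraMap k K) =
          ∏ C ∈ (Set.toFinite O.orbit).toFinset, (Polynomial.X - Polynomial.C (β C))) ∧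
    ((∏ C ∈ (Set.toFinite (Set.univ : Set (↥L ⧸ H.subgroupOf L))).toFinset,
        (Polynomial.X - Polynomial.C (β C))) =
      ∏ O ∈ (Set.toFinite (Set.univ : Set (MulAction.orbitRel.Quotient
          (↥((galoisGroup k α).subgroupOf L)) (↥L ⧸ H.subgroupOf L)))).toFinset,
        ∏ C ∈ (Set.toFinite O.orbit).toFinset, (Polynomial.X - Polynomial.C (β C))) ∧
    (∀ R₀ : Polynomial k, R₀.Monic →
      R₀.map (algebraMap k K) =
        (∏ C ∈ (Set.toFinite (Set.univ : Set (↥L ⧸ H.subgroupOf L))).toFinset,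
          (Polynomial.X - Polynomial.C (β C))) →
      (UniqueFactorizationMonoid.normalizedFactors R₀).map Polynomial.natDegree =
        ((Set.toFinite (Set.univ : Set (MulAction.orbitRel.Quotient
            (↥((galoisGroup k α).subgroupOf L)) (↥L ⧸ H.subgroupOf L)))).toFinset.val).map
          (fun O => Nat.card O.orbit)) :=
  resolvent_factorization_by_orbits_general α hinj hcoeff hgen H L hGL P β hβ hβinj
end
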